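/- arXiv:1903.02482 — 2 statements merged into one kernel-verified Lean document; each statement's English description precedes it below -/
import Mathlib

section
/- Let p : ℝⁿ → ℝ be an analytic function. Then either p is identically zero, or its zero set {x ∈ ℝⁿ | p(x) = 0} has Lebesgue measure zero. -/
open MeasureTheory Topology Filter

open Set in
/-- The zero set of a real-analytic function on `ℝ` that is not identically zero is countable. -/
lemma analytic_zero_set_countable {f : ℝ → ℝ} (hf : ∀ x, AnalyticAt ℝ f x)
    {a : ℝ} (ha : f a ≠ 0) : Set.Countable {t : ℝ | f t = 0} := by
  set Z := {t : ℝ | f t = 0} with hZ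
  have key : ∀ z ∈ Z, ∃ y, z < y ∧ ∀ t ∈ Ioo z y, f t ≠ 0 := by
    intro z hz
    rcases (hf z).eventually_eq_zero_or_eventually_ne_zero with h0 | h1
    · exfalso
      have heq : EqOn f 0 (univ : Set ℝ) := by
        apply AnalyticOnNhd.eqOn_zero_of_preconnected_of_frequently_eq_zero
          (fun x _ => hf x) isPreconnected_univ (mem_univ z)
        exact (h0.filter_mono nhdsWithin_le_nhds).frequently
      exact ha (heq (mem_univ a))
    · have h2 : ∀ᶠ t in 𝓝[>] z, f t ≠ 0 :=
        h1.filter_mono (nhdsWithin_mono _ fun t ht => ne_of_gt ht)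
      rcases mem_nhdsGT_iff_exists_Ioo_subset.1 h2 with ⟨y, hy, hsub⟩
      exact ⟨y, hy, fun t ht => hsub ht⟩
  choose! y hy1 hy2 using key
  have hdisj : Z.PairwiseDisjoint fun z => Ioo z (y z) := by
    have main : ∀ u ∈ Z, ∀ v ∈ Z, u < v → Disjoint (Ioo u (y u)) (Ioo v (y v)) := by
      intro u hu v hv huv
      have hyuv : y u ≤ v := by
        by_contra hc
        exact hy2 u hu v ⟨huv, lt_of_not_ge hc⟩ hv
      refine Set.disjoint_left.2 fun t htu htv => ?_
      exact absurd (htu.2.trans_le (hyuv.trans htv.1.le)) (lt_irrefl t)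
    intro u hu v hv huv
    rcases huv.lt_or_gt with h | h
    · exact main u hu v hv h
    · exact (main v hv u hu h).symm
  exact hdisj.countable_of_Ioo hy1

/-- `t ↦ Fin.cons t c` is analytic. -/
lemma analyticAt_consLeft {n : ℕ} (c : Fin n → ℝ) (t₀ : ℝ) :
    AnalyticAt ℝ (fun t : ℝ => (Fin.cons t c : Fin (n + 1) → ℝ)) t₀ := by
  have h : (fun t : ℝ => (Fin.cons t c : Fin (n + 1) → ℝ)) =
      fun t => (ContinuousLinearMap.pi
        (fun i : Fin (n + 1) =>
          Fin.cases (ContinuousLinearMap.id ℝ ℝ) (fun _ => 0) i)) t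
        + (Fin.cons 0 c : Fin (n + 1) → ℝ) := by
    funext t
    funext i
    induction i using Fin.cases <;> simp
  rw [h]
  set L : ℝ →L[ℝ] (Fin (n + 1) → ℝ) := ContinuousLinearMap.pi
    (fun i : Fin (n + 1) => Fin.cases (ContinuousLinearMap.id ℝ ℝ) (fun _ => 0) i)
  exact (L.analyticAt t₀).add analyticAt_const

/-- `y ↦ Fin.cons t y` is analytic. -/
lemma analyticAt_consRight {n : ℕ} (t : ℝ) (y₀ : Fin n → ℝ) :
    AnalyticAt ℝ (fun y : Fin n → ℝ => (Fin.cons t y : Fin (n + 1) → ℝ)) y₀ := by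
  have h : (fun y : Fin n → ℝ => (Fin.cons t y : Fin (n + 1) → ℝ)) =
      fun y => (Fin.cons t 0 : Fin (n + 1) → ℝ)
        + (ContinuousLinearMap.pi
        (fun i : Fin (n + 1) =>
          Fin.cases (0 : (Fin n → ℝ) →L[ℝ] ℝ)
            (fun j => ContinuousLinearMap.proj j) i)) y := by
    funext y
    funext i
    induction i using Fin.cases <;> simp
  rw [h]
  set M : (Fin n → ℝ) →L[ℝ] (Fin (n + 1) → ℝ) := ContinuousLinearMap.pi
    (fun i : Fin (n + 1) => Fin.cases (0 : (Fin n → ℝ) →L[ℝ] ℝ)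
      (fun j => ContinuousLinearMap.proj j) i)
  exact analyticAt_const.add (M.analyticAt y₀)

theorem analytic_zero_set_null {n : ℕ} (p : (Fin n → ℝ) → ℝ)
    (hp : ∀ x, AnalyticAt ℝ p x) :
    (∀ x, p x = 0) ∨ volume {x : Fin n → ℝ | p x = 0} = 0 := by
  induction n with
  | zero =>
    by_cases h : p default = 0
    · left
      intro x
      rwa [Subsingleton.elim x default]
    · right
      have he : {x : Fin 0 → ℝ | p x = 0} = ∅ := by
        ext x
        simp only [Set.mem_setOf_eq, Set.mem_empty_iff_false, iff_false]
        rw [Subsingleton.elim x default]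
        exact h
      rw [he]
      exact measure_empty
  | succ n ih =>
    by_cases hz : ∀ x, p x = 0
    · exact Or.inl hz
    right
    push_neg at hz
    obtain ⟨a, ha⟩ := hz
    -- the slice functions
    have hslice : ∀ t : ℝ, ∀ y : Fin n → ℝ,
        AnalyticAt ℝ (fun y : Fin n → ℝ => p (Fin.cons t y)) y := by
      intro t y
      have h1 := (hp (Fin.cons t y)).comp (analyticAt_consRight t y)
      simpa [Function.comp_def] using h1
    -- the 1-dimensional function through `a`
    set c : Fin n → ℝ := Fin.tail a with hc
    have hg : ∀ t : ℝ, AnalyticAt ℝ (fun t : ℝ => p (Fin.cons t c)) t := by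
      intro t
      have h1 : AnalyticAt ℝ (p ∘ fun s : ℝ => Fin.cons s c) t :=
        AnalyticAt.comp (hp _) (analyticAt_consLeft c t)
      simpa [Function.comp_def] using h1
    have hga : p (Fin.cons (a 0) c) ≠ 0 := by
      rwa [hc, Fin.cons_self_tail]
    have hg0 : volume {t : ℝ | p (Fin.cons t c) = 0} = 0 :=
      (analytic_zero_set_countable hg hga).measure_zero _
    -- a.e. slice is null
    have hae : ∀ᵐ t : ℝ, volume {y : Fin n → ℝ | p (Fin.cons t y) = 0} = 0 := by
      rw [ae_iff]
      refine measure_mono_null (fun t ht => ?_) hg0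
      simp only [Set.mem_setOf_eq] at ht ⊢
      by_contra h
      rcases ih (fun y => p (Fin.cons t y)) (hslice t) with hall | hnull
      · exact h (hall c)
      · exact ht hnull
    -- Fubini via the measurable equivalence
    have hpc : Continuous p := by
      rw [continuous_iff_continuousAt]
      exact fun x => (hp x).continuousAt
    have hZm : MeasurableSet {x : Fin (n + 1) → ℝ | p x = 0} :=
      (isClosed_eq hpc continuous_const).measurableSet
    set e := MeasurableEquiv.piFinSuccAbove (fun _ : Fin (n + 1) => ℝ) 0 with he
    have hmp : MeasurePreserving e volume volume :=
      volume_preserving_piFinSuccAbove (fun _ : Fin (n + 1) => ℝ) 0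
    have hsymm : ∀ (t : ℝ) (y : Fin n → ℝ), e.symm (t, y) = Fin.cons t y := by
      intro t y
      exact Fin.insertNth_zero' t y
    have hpre : volume ((⇑e.symm) ⁻¹' {x : Fin (n + 1) → ℝ | p x = 0}) =
        volume {x : Fin (n + 1) → ℝ | p x = 0} :=
      (MeasurePreserving.symm e hmp).measure_preimage hZm.nullMeasurableSet
    rw [← hpre]
    have hZ'm : MeasurableSet ((⇑e.symm) ⁻¹' {x : Fin (n + 1) → ℝ | p x = 0}) :=
      e.symm.measurable hZm
    rw [Measure.volume_eq_prod, Measure.measure_prod_null hZ'm]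
    refine hae.mono fun t ht => ?_
    have : (Prod.mk t ⁻¹' ((⇑e.symm) ⁻¹' {x : Fin (n + 1) → ℝ | p x = 0})) =
        {y : Fin n → ℝ | p (Fin.cons t y) = 0} := by
      ext y
      simp [hsymm t y]
    simp only [this]
    exact ht
end

section
/- Let g : ℝⁿ → ℝ be analytic and let F, G : ℝⁿ → ℝ be piecewise smooth under analytic partition. Then the function H defined by H(x) = F(x) if g(x) < 0 and H(x) = G(x) if g(x) ≥ 0 is piecewise smooth under analytic partition. -/
open MeasureTheory
open scoped Classical

/-- The indicator product of region `i` of an analytic partition. -/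
noncomputable def regionInd {n : ℕ} {ι : Type} {M O : ι → ℕ}
    (p : (i : ι) → Fin (M i) → (Fin n → ℝ) → ℝ)
    (q : (i : ι) → Fin (O i) → (Fin n → ℝ) → ℝ) (i : ι) (x : Fin n → ℝ) : ℝ :=
  (∏ j, if 0 ≤ p i j x then (1 : ℝ) else 0) *
    ∏ l, if q i l x < 0 then (1 : ℝ) else 0

/-- `P : ℝⁿ → ℝ` is piecewise smooth under analytic partition. -/
def PiecewiseSmooth {n : ℕ} (P : (Fin n → ℝ) → ℝ) : Prop :=
  ∃ (ι : Type) (_ : Countable ι) (M O : ι → ℕ)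
    (p : (i : ι) → Fin (M i) → (Fin n → ℝ) → ℝ)
    (q : (i : ι) → Fin (O i) → (Fin n → ℝ) → ℝ)
    (h : ι → (Fin n → ℝ) → ℝ),
    (∀ i j x, AnalyticAt ℝ (p i j) x) ∧
    (∀ i l x, AnalyticAt ℝ (q i l) x) ∧
    (∀ i, ContDiff ℝ (⊤ : ℕ∞) (h i)) ∧
    (∀ x : Fin n → ℝ, ∃! i : ι, (∀ j, 0 ≤ p i j x) ∧ (∀ l, q i l x < 0)) ∧
    (∀ x, P x = ∑' i : ι, regionInd p q i x * h i x)

lemma regionInd_eq_ite {n : ℕ} {ι : Type} {M O : ι → ℕ}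
    (p : (i : ι) → Fin (M i) → (Fin n → ℝ) → ℝ)
    (q : (i : ι) → Fin (O i) → (Fin n → ℝ) → ℝ) (i : ι) (x : Fin n → ℝ) :
    regionInd p q i x =
      if ((∀ j, 0 ≤ p i j x) ∧ (∀ l, q i l x < 0)) then (1 : ℝ) else 0 := by
  unfold regionInd
  by_cases h : (∀ j, 0 ≤ p i j x) ∧ (∀ l, q i l x < 0)
  · simp [h.1, h.2]
  · rw [if_neg h]
    rcases not_and_or.mp h with h | h <;> push_neg at h
    · obtain ⟨j, hj⟩ := h
      have : (∏ j, if 0 ≤ p i j x then (1 : ℝ) else 0) = 0 :=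
        Finset.prod_eq_zero (Finset.mem_univ j) (if_neg (not_le.mpr hj))
      rw [this, zero_mul]
    · obtain ⟨l, hl⟩ := h
      have : (∏ l, if q i l x < 0 then (1 : ℝ) else 0) = 0 :=
        Finset.prod_eq_zero (Finset.mem_univ l) (if_neg (not_lt.mpr hl))
      rw [this, mul_zero]

lemma tsum_regionInd {n : ℕ} {ι : Type} [Countable ι] {M O : ι → ℕ}
    (p : (i : ι) → Fin (M i) → (Fin n → ℝ) → ℝ)
    (q : (i : ι) → Fin (O i) → (Fin n → ℝ) → ℝ)
    (h : ι → (Fin n → ℝ) → ℝ) (x : Fin n → ℝ)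
    (hu : ∃! i : ι, (∀ j, 0 ≤ p i j x) ∧ (∀ l, q i l x < 0)) :
    ∑' i : ι, regionInd p q i x * h i x = h hu.choose x := by
  obtain ⟨hc, hun⟩ := hu.choose_spec
  rw [tsum_eq_single hu.choose]
  · rw [regionInd_eq_ite, if_pos hc, one_mul]
  · intro b hb
    rw [regionInd_eq_ite, if_neg, zero_mul]
    intro hcb
    exact hb (hun b hcb)

theorem piecewiseSmooth_ite {n : ℕ} (g F G : (Fin n → ℝ) → ℝ)
    (hg : ∀ x, AnalyticAt ℝ g x)
    (hF : PiecewiseSmooth F) (hG : PiecewiseSmooth G) :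
    PiecewiseSmooth fun x => if g x < 0 then F x else G x := by
  obtain ⟨ι₁, _, M₁, O₁, p₁, q₁, h₁, hp₁, hq₁, hh₁, hu₁, hsum₁⟩ := hF
  obtain ⟨ι₂, _, M₂, O₂, p₂, q₂, h₂, hp₂, hq₂, hh₂, hu₂, hsum₂⟩ := hG
  refine ⟨ι₁ ⊕ ι₂, inferInstance,
    Sum.elim M₁ fun i => M₂ i + 1,
    Sum.elim (fun i => O₁ i + 1) O₂,
    fun i => Sum.rec (motive := fun i => Fin (Sum.elim M₁ (fun i => M₂ i + 1) i) → (Fin n → ℝ) → ℝ)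
      (fun i => p₁ i) (fun i => Fin.cons g (p₂ i)) i,
    fun i => Sum.rec (motive := fun i => Fin (Sum.elim (fun i => O₁ i + 1) O₂ i) → (Fin n → ℝ) → ℝ)
      (fun i => Fin.cons g (q₁ i)) (fun i => q₂ i) i,
    Sum.elim h₁ h₂, ?_, ?_, ?_, ?_, ?_⟩
  · rintro (i | i) j x
    · exact hp₁ i j x
    · refine Fin.cases ?_ ?_ j
      · simpa using hg x
      · intro j; simpa using hp₂ i j x
  · rintro (i | i) l x
    · refine Fin.cases ?_ ?_ l
      · simpa using hg x
      · intro l; simpa using hq₁ i l x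
    · exact hq₂ i l x
  · rintro (i | i)
    · exact hh₁ i
    · exact hh₂ i
  · intro x
    beta_reduce
    by_cases hgx : g x < 0
    · obtain ⟨i₀, hi₀, hun⟩ := hu₁ x
      refine ⟨Sum.inl i₀, ⟨hi₀.1, ?_⟩, ?_⟩
      · intro l
        refine Fin.cases ?_ ?_ l
        · simpa using hgx
        · intro l; simpa using hi₀.2 l
      · rintro (b | b) ⟨hb1, hb2⟩
        · have : (∀ j, 0 ≤ p₁ b j x) ∧ (∀ l, q₁ b l x < 0) :=
            ⟨hb1, fun l => by simpa using hb2 l.succ⟩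
          exact congrArg Sum.inl (hun b this)
        · have : g x < 0 → False := fun h => absurd (by simpa using hb1 (0 : Fin (M₂ b + 1))) (not_le.mpr h)
          exact absurd hgx this
    · obtain ⟨i₀, hi₀, hun⟩ := hu₂ x
      refine ⟨Sum.inr i₀, ⟨?_, hi₀.2⟩, ?_⟩
      · intro j
        refine Fin.cases ?_ ?_ j
        · simpa using not_lt.mp hgx
        · intro j; simpa using hi₀.1 j
      · rintro (b | b) ⟨hb1, hb2⟩
        · exact absurd (by simpa using hb2 (0 : Fin (O₁ b + 1))) (not_lt.mpr (not_lt.mp hgx))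
        · have : (∀ j, 0 ≤ p₂ b j x) ∧ (∀ l, q₂ b l x < 0) :=
            ⟨fun j => by simpa using hb1 j.succ, hb2⟩
          exact congrArg Sum.inr (hun b this)
  · intro x
    beta_reduce
    by_cases hgx : g x < 0
    · obtain ⟨i₀, hi₀, hun⟩ := hu₁ x
      rw [if_pos hgx, hsum₁ x]
      rw [tsum_eq_single i₀ (fun b hb => by
        rw [regionInd_eq_ite, if_neg (fun hc => hb (hun b hc)), zero_mul])]
      rw [tsum_eq_single (Sum.inl i₀ : ι₁ ⊕ ι₂) ?_]
      · rw [regionInd_eq_ite, regionInd_eq_ite, if_pos hi₀, if_pos]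
        · rfl
        · refine ⟨hi₀.1, fun l => ?_⟩
          refine Fin.cases ?_ ?_ l
          · simpa using hgx
          · intro l; simpa using hi₀.2 l
      · rintro (b | b) hb
        · rw [regionInd_eq_ite, if_neg, zero_mul]
          rintro ⟨hb1, hb2⟩
          exact hb (congrArg Sum.inl (hun b ⟨hb1, fun l => by simpa using hb2 l.succ⟩))
        · rw [regionInd_eq_ite, if_neg, zero_mul]
          rintro ⟨hb1, -⟩
          exact absurd (by simpa using hb1 (0 : Fin (M₂ b + 1))) (not_le.mpr hgx)
    · obtain ⟨i₀, hi₀, hun⟩ := hu₂ x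
      rw [if_neg hgx, hsum₂ x]
      rw [tsum_eq_single i₀ (fun b hb => by
        rw [regionInd_eq_ite, if_neg (fun hc => hb (hun b hc)), zero_mul])]
      rw [tsum_eq_single (Sum.inr i₀ : ι₁ ⊕ ι₂) ?_]
      · rw [regionInd_eq_ite, regionInd_eq_ite, if_pos hi₀, if_pos]
        · rfl
        · refine ⟨fun j => ?_, hi₀.2⟩
          refine Fin.cases ?_ ?_ j
          · simpa using not_lt.mp hgx
          · intro j; simpa using hi₀.1 j
      · rintro (b | b) hb
        · rw [regionInd_eq_ite, if_neg, zero_mul]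
          rintro ⟨-, hb2⟩
          exact absurd (by simpa using hb2 (0 : Fin (O₁ b + 1))) (not_lt.mpr (not_lt.mp hgx))
        · rw [regionInd_eq_ite, if_neg, zero_mul]
          rintro ⟨hb1, hb2⟩
          exact hb (congrArg Sum.inr (hun b ⟨fun j => by simpa using hb1 j.succ, hb2⟩))
end
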